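/- arXiv:2102.12157 — 3 statements merged into one kernel-verified Lean document; each statement's English description precedes it below -/
import Mathlib

section
/- Let Ω be an open set of ℝ^N, N ≥ 1, and let f ∈ C¹([0,∞)) be convex. Let u ∈ L¹_loc(Ω) with u ≥ 0 a.e. in Ω, f′(u) ∈ L¹_loc(Ω), and ∫_Ω f′(u)φ² ≤ ∫_Ω |∇φ|² for all φ ∈ C_c^∞(Ω). Then for every φ ∈ H¹₀(Ω) one has f′(u)φ² ∈ L¹(Ω) and ∫_Ω f′(u)φ² ≤ ∫_Ω |∇φ|². -/
open MeasureTheory Set Filter Metric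

noncomputable section

variable {N : ℕ}

/-- Smooth test functions compactly supported in `Ω`. -/
def IsTestFun (Ω : Set (EuclideanSpace ℝ (Fin N))) (φ : EuclideanSpace ℝ (Fin N) → ℝ) : Prop :=
  ContDiff ℝ (⊤ : ℕ∞) φ ∧ HasCompactSupport φ ∧ tsupport φ ⊆ Ω

/-- `C¹` test functions compactly supported in `Ω`. -/
def IsTestFunC1 (Ω : Set (EuclideanSpace ℝ (Fin N))) (φ : EuclideanSpace ℝ (Fin N) → ℝ) : Prop :=
  ContDiff ℝ 1 φ ∧ HasCompactSupport φ ∧ tsupport φ ⊆ Ω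

/-- `u ∈ H¹(Ω)` : `u` and its gradient belong to `L²(Ω)`. -/
def MemH1 (Ω : Set (EuclideanSpace ℝ (Fin N))) (u : EuclideanSpace ℝ (Fin N) → ℝ) : Prop :=
  MemLp u 2 (volume.restrict Ω) ∧ MemLp (gradient u) 2 (volume.restrict Ω)

/-- `u ∈ H¹_loc(Ω)`. -/
def MemH1loc (Ω : Set (EuclideanSpace ℝ (Fin N))) (u : EuclideanSpace ℝ (Fin N) → ℝ) : Prop :=
  ∀ K : Set (EuclideanSpace ℝ (Fin N)), IsCompact K → K ⊆ Ω →
    MemLp u 2 (volume.restrict K) ∧ MemLp (gradient u) 2 (volume.restrict K)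

/-- `u ∈ H¹₀(Ω)` : `u ∈ H¹(Ω)` and `u` is an `H¹`-limit of smooth compactly supported functions. -/
def MemH10 (Ω : Set (EuclideanSpace ℝ (Fin N))) (u : EuclideanSpace ℝ (Fin N) → ℝ) : Prop :=
  MemH1 Ω u ∧ ∃ φ : ℕ → EuclideanSpace ℝ (Fin N) → ℝ, (∀ n, IsTestFun Ω (φ n)) ∧
    Tendsto (fun n => ∫ x in Ω, ((u x - φ n x) ^ 2 + ‖gradient u x - gradient (φ n) x‖ ^ 2))
      atTop (nhds 0)

/-- `u` solves `−Δu = g(u)` in `D′(Ω)`. -/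
def SolvesOn (Ω : Set (EuclideanSpace ℝ (Fin N))) (g : ℝ → ℝ)
    (u : EuclideanSpace ℝ (Fin N) → ℝ) : Prop :=
  LocallyIntegrableOn (fun x => g (u x)) Ω volume ∧
  ∀ φ : EuclideanSpace ℝ (Fin N) → ℝ, IsTestFun Ω φ →
    ∫ x in Ω, (inner ℝ (gradient u x) (gradient φ x) : ℝ) = ∫ x in Ω, g (u x) * φ x

/-- Stability of `u` on `Ω`, where `g'` plays the role of `f′`. -/
def StableOn (Ω : Set (EuclideanSpace ℝ (Fin N))) (g' : ℝ → ℝ)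
    (u : EuclideanSpace ℝ (Fin N) → ℝ) : Prop :=
  LocallyIntegrableOn (fun x => g' (u x)) Ω volume ∧
  ∀ φ : EuclideanSpace ℝ (Fin N) → ℝ, IsTestFunC1 Ω φ →
    ∫ x in Ω, g' (u x) * φ x ^ 2 ≤ ∫ x in Ω, ‖gradient φ x‖ ^ 2

/-- Local stability of `u` on `Ω`. -/
def LocallyStableOn (Ω : Set (EuclideanSpace ℝ (Fin N))) (g' : ℝ → ℝ)
    (u : EuclideanSpace ℝ (Fin N) → ℝ) : Prop :=
  LocallyIntegrableOn (fun x => g' (u x)) Ω volume ∧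
  ∀ x ∈ Ω, ∃ ω : Set (EuclideanSpace ℝ (Fin N)), IsOpen ω ∧ x ∈ ω ∧ ω ⊆ Ω ∧
    ∀ φ : EuclideanSpace ℝ (Fin N) → ℝ, IsTestFunC1 ω φ →
      ∫ y in ω, g' (u y) * φ y ^ 2 ≤ ∫ y in ω, ‖gradient φ y‖ ^ 2

/-- The principal Dirichlet eigenvalue of `−Δ` on `Ω`, as the infimum of the Rayleigh quotient. -/
def lambda1 (Ω : Set (EuclideanSpace ℝ (Fin N))) : ℝ :=
  sInf { r : ℝ | ∃ φ : EuclideanSpace ℝ (Fin N) → ℝ, IsTestFun Ω φ ∧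
    (∫ x in Ω, φ x ^ 2) ≠ 0 ∧
    r = (∫ x in Ω, ‖gradient φ x‖ ^ 2) / (∫ x in Ω, φ x ^ 2) }

/-- `w` is a positive first Dirichlet eigenfunction of `−Δ` on `Ω`. -/
def IsFirstEigenfunction (Ω : Set (EuclideanSpace ℝ (Fin N))) (w : EuclideanSpace ℝ (Fin N) → ℝ) :
    Prop :=
  MemH10 Ω w ∧ (∀ x ∈ Ω, 0 < w x) ∧
  ∀ φ : EuclideanSpace ℝ (Fin N) → ℝ, IsTestFun Ω φ →
    ∫ x in Ω, (inner ℝ (gradient w x) (gradient φ x) : ℝ) = lambda1 Ω * ∫ x in Ω, w x * φ x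

/-- A bounded domain : open, connected and bounded. -/
def IsBoundedDomain (Ω : Set (EuclideanSpace ℝ (Fin N))) : Prop :=
  IsOpen Ω ∧ IsConnected Ω ∧ Bornology.IsBounded Ω

/-- Finite Morse index : there is `K` such that no `K+1`-dimensional subspace of `C¹_c(Ω)`
consists (apart from `0`) of functions making the quadratic form negative. -/
def HasFiniteMorseIndex (Ω : Set (EuclideanSpace ℝ (Fin N))) (g' : ℝ → ℝ)
    (u : EuclideanSpace ℝ (Fin N) → ℝ) : Prop :=
  LocallyIntegrableOn (fun x => g' (u x)) Ω volume ∧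
  ∃ K : ℕ, ∀ ψ : Fin (K + 1) → EuclideanSpace ℝ (Fin N) → ℝ,
    (∀ i, IsTestFunC1 Ω (ψ i)) → LinearIndependent ℝ ψ →
    ∃ c : Fin (K + 1) → ℝ, (∃ i, c i ≠ 0) ∧
      ¬ ((∫ x in Ω, ‖gradient (fun y => ∑ i, c i * ψ i y) x‖ ^ 2) <
          ∫ x in Ω, g' (u x) * (∑ i, c i * ψ i x) ^ 2)

/-- L² norm squared of `toLp` equals the integral of the pointwise norm squared. -/
private lemma norm_toLp_sq_aux {α : Type*} [MeasurableSpace α] {μ : Measure α}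
    {E : Type*} [NormedAddCommGroup E] [InnerProductSpace ℝ E] {w : α → E}
    (hw : MemLp w 2 μ) : (∫ x, ‖w x‖ ^ 2 ∂μ) = ‖hw.toLp w‖ ^ 2 := by
  have h1 : (inner ℝ (hw.toLp w) (hw.toLp w) : ℝ) = ‖hw.toLp w‖ ^ 2 := real_inner_self_eq_norm_sq _
  rw [← h1, MeasureTheory.L2.inner_def]
  refine integral_congr_ae ?_
  filter_upwards [hw.coeFn_toLp] with x hx
  rw [hx, real_inner_self_eq_norm_sq]

private lemma integrableOn_mul_sq_aux {N : ℕ} {Ω : Set (EuclideanSpace ℝ (Fin N))}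
    {h : EuclideanSpace ℝ (Fin N) → ℝ} (hh : LocallyIntegrableOn h Ω volume)
    {ψ : EuclideanSpace ℝ (Fin N) → ℝ} (hc : Continuous ψ) (hcs : HasCompactSupport ψ)
    (hsub : tsupport ψ ⊆ Ω) :
    IntegrableOn (fun x => h x * ψ x ^ 2) Ω volume := by
  have hK : IntegrableOn h (tsupport ψ) volume := hh.integrableOn_compact_subset hsub hcs
  obtain ⟨x₀, hx₀⟩ := (hc.abs).exists_forall_ge_of_hasCompactSupport (hcs.abs)
  have h1 : Integrable (fun x => ψ x ^ 2 * h x) (volume.restrict (tsupport ψ)) := by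
    refine hK.bdd_mul ((hc.pow 2).aestronglyMeasurable) (c := |ψ x₀| ^ 2) (Eventually.of_forall fun x => ?_)
    rw [Real.norm_eq_abs, abs_pow]
    exact pow_le_pow_left₀ (abs_nonneg _) (hx₀ x) 2
  have hsupp : Function.support (fun x => ψ x ^ 2 * h x) ⊆ tsupport ψ := by
    intro x hx
    by_contra hxx
    exact hx (by simp [image_eq_zero_of_notMem_tsupport hxx])
  have h2 : Integrable (fun x => ψ x ^ 2 * h x) volume :=
    (integrableOn_iff_integrable_of_support_subset hsupp).mp h1
  simpa [mul_comm] using h2.integrableOn (s := Ω)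

/-- The stability inequality, once valid for smooth compactly supported test
functions, extends to all of `H¹₀(Ω)` (and the integrand is integrable there). -/
theorem stability_inequality_extends_to_H10
    {N : ℕ} (hN : 1 ≤ N) (Ω : Set (EuclideanSpace ℝ (Fin N))) (hΩ : IsOpen Ω)
    (f : ℝ → ℝ) (hf1 : ContDiffOn ℝ 1 f (Ici 0)) (hfconv : ConvexOn ℝ (Ici 0) f)
    (u : EuclideanSpace ℝ (Fin N) → ℝ)
    (huloc : LocallyIntegrableOn u Ω volume)
    (hupos : ∀ᵐ x ∂volume.restrict Ω, 0 ≤ u x)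
    (hfu' : LocallyIntegrableOn (fun x => derivWithin f (Ici 0) (u x)) Ω volume)
    (hstab : ∀ φ : EuclideanSpace ℝ (Fin N) → ℝ, IsTestFun Ω φ →
      ∫ x in Ω, derivWithin f (Ici 0) (u x) * φ x ^ 2 ≤ ∫ x in Ω, ‖gradient φ x‖ ^ 2) :
    ∀ φ : EuclideanSpace ℝ (Fin N) → ℝ, MemH10 Ω φ →
      IntegrableOn (fun x => derivWithin f (Ici 0) (u x) * φ x ^ 2) Ω volume ∧
      ∫ x in Ω, derivWithin f (Ici 0) (u x) * φ x ^ 2 ≤ ∫ x in Ω, ‖gradient φ x‖ ^ 2 := by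
  intro φ hφ
  obtain ⟨⟨hφ2, hφg2⟩, ψ, hψt, hconv⟩ := hφ
  set μ := volume.restrict Ω with hμdef
  set h : EuclideanSpace ℝ (Fin N) → ℝ := fun x => derivWithin f (Ici 0) (u x) with hhdef
  set c : ℝ := derivWithin f (Ici 0) 0 with hcdef
  -- monotonicity of the derivative of a convex function
  have hmono : ∀ t : ℝ, 0 ≤ t → c ≤ derivWithin f (Ici 0) t := fun t ht =>
    hfconv.monotoneOn_derivWithin (hf1.differentiableOn one_ne_zero) self_mem_Ici ht ht
  set q : EuclideanSpace ℝ (Fin N) → ℝ := fun x => h x - c with hqdef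
  have hq_li : LocallyIntegrableOn q Ω volume :=
    hfu'.sub ((locallyIntegrable_const c).locallyIntegrableOn Ω)
  have hq0 : ∀ᵐ x ∂μ, 0 ≤ q x := hupos.mono fun x hx => sub_nonneg.2 (hmono _ hx)
  have h_meas : AEStronglyMeasurable h μ := hfu'.aestronglyMeasurable
  have hq_meas : AEStronglyMeasurable q μ := h_meas.sub aestronglyMeasurable_const
  -- test function facts
  have hψc : ∀ n, Continuous (ψ n) := fun n => (hψt n).1.continuous
  have hψcs : ∀ n, HasCompactSupport (ψ n) := fun n => (hψt n).2.1
  have hψ2 : ∀ n, MemLp (ψ n) 2 μ := fun n =>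
    ((hψc n).memLp_of_hasCompactSupport (hψcs n)).restrict Ω
  have hgc : ∀ n, Continuous (gradient (ψ n)) := fun n =>
    (InnerProductSpace.toDual ℝ _).symm.continuous.comp ((hψt n).1.continuous_fderiv (by simp))
  have hgcs : ∀ n, HasCompactSupport (gradient (ψ n)) := fun n =>
    ((hψcs n).fderiv (𝕜 := ℝ)).comp_left (map_zero _)
  have hgψ2 : ∀ n, MemLp (gradient (ψ n)) 2 μ := fun n =>
    ((hgc n).memLp_of_hasCompactSupport (hgcs n)).restrict Ω
  -- convergence of the two pieces
  set A : ℕ → ℝ := fun n => ∫ x, (φ x - ψ n x) ^ 2 ∂μ with hAdef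
  set B : ℕ → ℝ := fun n => ∫ x, ‖gradient φ x - gradient (ψ n) x‖ ^ 2 ∂μ with hBdef
  have hsub2 : ∀ n, MemLp (fun x => φ x - ψ n x) 2 μ := fun n => hφ2.sub (hψ2 n)
  have hgsub2 : ∀ n, MemLp (fun x => gradient φ x - gradient (ψ n) x) 2 μ := fun n =>
    hφg2.sub (hgψ2 n)
  have hsq_int : ∀ n, Integrable (fun x => (φ x - ψ n x) ^ 2) μ := fun n =>
    (hsub2 n).integrable_sq
  have hgsq_int : ∀ n, Integrable (fun x => ‖gradient φ x - gradient (ψ n) x‖ ^ 2) μ := fun n =>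
    (memLp_two_iff_integrable_sq_norm (hgsub2 n).aestronglyMeasurable).mp (hgsub2 n)
  have hAB : ∀ n, (∫ x, ((φ x - ψ n x) ^ 2 + ‖gradient φ x - gradient (ψ n) x‖ ^ 2) ∂μ)
      = A n + B n := fun n => integral_add (hsq_int n) (hgsq_int n)
  have hA_nonneg : ∀ n, 0 ≤ A n := fun n => integral_nonneg fun x => sq_nonneg _
  have hB_nonneg : ∀ n, 0 ≤ B n := fun n => integral_nonneg fun x => sq_nonneg _
  have hA0 : Tendsto A atTop (nhds 0) := by
    refine squeeze_zero hA_nonneg (fun n => ?_) (by simpa [hAB] using hconv)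
    exact le_add_of_nonneg_right (hB_nonneg n)
  have hB0 : Tendsto B atTop (nhds 0) := by
    refine squeeze_zero hB_nonneg (fun n => ?_) (by simpa [hAB] using hconv)
    exact le_add_of_nonneg_left (hA_nonneg n)
  -- Lp convergence
  have hAeq : ∀ n, A n = ‖(hsub2 n).toLp _‖ ^ 2 := fun n => by
    rw [← norm_toLp_sq_aux (hsub2 n)]
    simp [hAdef, sq_abs]
  have hBeq : ∀ n, B n = ‖(hgsub2 n).toLp _‖ ^ 2 := fun n => by
    rw [← norm_toLp_sq_aux (hgsub2 n)]
  have hnormA : Tendsto (fun n => ‖(hsub2 n).toLp _‖) atTop (nhds 0) := by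
    have := (Real.continuous_sqrt.tendsto 0).comp hA0
    simp only [Function.comp_def, Real.sqrt_zero] at this
    refine this.congr fun n => ?_
    rw [hAeq n, Real.sqrt_sq (norm_nonneg _)]
  have hnormB : Tendsto (fun n => ‖(hgsub2 n).toLp _‖) atTop (nhds 0) := by
    have := (Real.continuous_sqrt.tendsto 0).comp hB0
    simp only [Function.comp_def, Real.sqrt_zero] at this
    refine this.congr fun n => ?_
    rw [hBeq n, Real.sqrt_sq (norm_nonneg _)]
  -- convergence of norms of approximants
  have htoLp_sub : ∀ n, (hsub2 n).toLp _ = hφ2.toLp φ - (hψ2 n).toLp (ψ n) := fun n =>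
    (hφ2.toLp_sub (hψ2 n)).symm
  have hgtoLp_sub : ∀ n, (hgsub2 n).toLp _ = hφg2.toLp _ - (hgψ2 n).toLp _ := fun n =>
    (hφg2.toLp_sub (hgψ2 n)).symm
  have hΨtend : Tendsto (fun n => (hψ2 n).toLp (ψ n)) atTop (nhds (hφ2.toLp φ)) := by
    rw [tendsto_iff_norm_sub_tendsto_zero]
    refine hnormA.congr fun n => ?_
    rw [htoLp_sub n, norm_sub_rev]
  have hgΨtend : Tendsto (fun n => (hgψ2 n).toLp _) atTop (nhds (hφg2.toLp _)) := by
    rw [tendsto_iff_norm_sub_tendsto_zero]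
    refine hnormB.congr fun n => ?_
    rw [hgtoLp_sub n, norm_sub_rev]
  set S : ℕ → ℝ := fun n => ∫ x, ψ n x ^ 2 ∂μ with hSdef
  set C : ℕ → ℝ := fun n => ∫ x, ‖gradient (ψ n) x‖ ^ 2 ∂μ with hCdef
  set Sφ : ℝ := ∫ x, φ x ^ 2 ∂μ with hSφdef
  set Cφ : ℝ := ∫ x, ‖gradient φ x‖ ^ 2 ∂μ with hCφdef
  have hSeq : ∀ n, S n = ‖(hψ2 n).toLp (ψ n)‖ ^ 2 := fun n => by
    rw [← norm_toLp_sq_aux (hψ2 n)]; simp [hSdef, sq_abs]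
  have hSφeq : Sφ = ‖hφ2.toLp φ‖ ^ 2 := by
    rw [← norm_toLp_sq_aux hφ2]; simp [hSφdef, sq_abs]
  have hCeq : ∀ n, C n = ‖(hgψ2 n).toLp _‖ ^ 2 := fun n => by
    rw [← norm_toLp_sq_aux (hgψ2 n)]
  have hCφeq : Cφ = ‖hφg2.toLp _‖ ^ 2 := by rw [← norm_toLp_sq_aux hφg2]
  have hS : Tendsto S atTop (nhds Sφ) := by
    rw [hSφeq]
    exact ((hΨtend.norm).pow 2).congr fun n => (hSeq n).symm
  have hC : Tendsto C atTop (nhds Cφ) := by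
    rw [hCφeq]
    exact ((hgΨtend.norm).pow 2).congr fun n => (hCeq n).symm
  -- a.e. convergent subsequence
  have heLp : Tendsto (fun n => eLpNorm (ψ n - φ) 2 μ) atTop (nhds 0) := by
    have h1 : ∀ n, eLpNorm (ψ n - φ) 2 μ = ENNReal.ofReal ‖(hsub2 n).toLp _‖ := by
      intro n
      rw [Lp.norm_toLp, ENNReal.ofReal_toReal (hsub2 n).eLpNorm_ne_top]
      exact (eLpNorm_sub_comm _ _ _ _).symm
    simp only [h1]
    have := (ENNReal.continuous_ofReal.tendsto 0).comp hnormA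
    simpa [Function.comp_def] using this
  obtain ⟨ns, hns_mono, hae⟩ :=
    (tendstoInMeasure_of_tendsto_eLpNorm (two_ne_zero)
      (fun n => (hψc n).aestronglyMeasurable) hφ2.aestronglyMeasurable heLp).exists_seq_tendsto_ae
  -- Fatou's lemma setup
  set Q : EuclideanSpace ℝ (Fin N) → ℝ := fun x => q x * φ x ^ 2 with hQdef
  have hφsq_meas : AEStronglyMeasurable (fun x => φ x ^ 2) μ := by
    simp only [pow_two]
    exact hφ2.aestronglyMeasurable.mul hφ2.aestronglyMeasurable
  have hQmeas : AEStronglyMeasurable Q μ := hq_meas.mul hφsq_meas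
  have hQ0 : ∀ᵐ x ∂μ, 0 ≤ Q x := hq0.mono fun x hx => mul_nonneg hx (sq_nonneg _)
  have hfn_int : ∀ n, Integrable (fun x => q x * ψ n x ^ 2) μ := fun n =>
    integrableOn_mul_sq_aux hq_li (hψc n) (hψcs n) (hψt n).2.2
  have hfn0 : ∀ n, ∀ᵐ x ∂μ, 0 ≤ q x * ψ n x ^ 2 :=
    fun n => hq0.mono fun x hx => mul_nonneg hx (sq_nonneg _)
  have hh_int : ∀ n, Integrable (fun x => h x * ψ n x ^ 2) μ := fun n =>
    integrableOn_mul_sq_aux hfu' (hψc n) (hψcs n) (hψt n).2.2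
  have hcψ_int : ∀ n, Integrable (fun x => c * ψ n x ^ 2) μ := fun n =>
    ((hψ2 n).integrable_sq).const_mul c
  have hfn_bound : ∀ n, (∫ x, q x * ψ n x ^ 2 ∂μ) ≤ C n - c * S n := by
    intro n
    have e1 : (∫ x, q x * ψ n x ^ 2 ∂μ)
        = (∫ x, h x * ψ n x ^ 2 ∂μ) - ∫ x, c * ψ n x ^ 2 ∂μ := by
      rw [← integral_sub (hh_int n) (hcψ_int n)]
      refine integral_congr_ae (Eventually.of_forall fun x => ?_)
      simp only [hqdef]; ring
    rw [e1, integral_const_mul c]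
    have := hstab (ψ n) (hψt n)
    have hCn : (∫ x, h x * ψ n x ^ 2 ∂μ) ≤ C n := this
    linarith
  have hfn_nonneg_int : ∀ n, 0 ≤ ∫ x, q x * ψ n x ^ 2 ∂μ := fun n =>
    integral_nonneg_of_ae (hfn0 n)
  have hbound_nonneg : ∀ k, 0 ≤ C (ns k) - c * S (ns k) := fun k =>
    le_trans (hfn_nonneg_int (ns k)) (hfn_bound (ns k))
  set L : ℝ := Cφ - c * Sφ with hLdef
  have hlim : Tendsto (fun k => C (ns k) - c * S (ns k)) atTop (nhds L) :=
    (hC.comp hns_mono.tendsto_atTop).sub ((hS.comp hns_mono.tendsto_atTop).const_mul c)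
  have hL0 : 0 ≤ L := ge_of_tendsto hlim (Eventually.of_forall hbound_nonneg)
  -- Fatou
  have hae' : ∀ᵐ x ∂μ, Tendsto (fun k => q x * ψ (ns k) x ^ 2) atTop (nhds (Q x)) :=
    hae.mono fun x hx => (hx.pow 2).const_mul (q x)
  have key : (∫⁻ x, ENNReal.ofReal (Q x) ∂μ) ≤ ENNReal.ofReal L := by
    have step1 : (∫⁻ x, ENNReal.ofReal (Q x) ∂μ)
        = ∫⁻ x, liminf (fun k => ENNReal.ofReal (q x * ψ (ns k) x ^ 2)) atTop ∂μ := by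
      refine lintegral_congr_ae (hae'.mono fun x hx => ?_)
      exact ((ENNReal.continuous_ofReal.tendsto _).comp hx).liminf_eq.symm
    rw [step1]
    have step2 : (∫⁻ x, liminf (fun k => ENNReal.ofReal (q x * ψ (ns k) x ^ 2)) atTop ∂μ)
        ≤ liminf (fun k => ∫⁻ x, ENNReal.ofReal (q x * ψ (ns k) x ^ 2) ∂μ) atTop := by
      refine lintegral_liminf_le' fun k => ?_
      exact ENNReal.measurable_ofReal.comp_aemeasurable
        ((hq_meas.aemeasurable).mul (((hψc (ns k)).pow 2).aemeasurable))
    refine step2.trans ?_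
    have heq : ∀ k, (∫⁻ x, ENNReal.ofReal (q x * ψ (ns k) x ^ 2) ∂μ)
        = ENNReal.ofReal (∫ x, q x * ψ (ns k) x ^ 2 ∂μ) := fun k =>
      (ofReal_integral_eq_lintegral_ofReal (hfn_int (ns k)) (hfn0 (ns k))).symm
    simp only [heq]
    have : liminf (fun k => ENNReal.ofReal (∫ x, q x * ψ (ns k) x ^ 2 ∂μ)) atTop
        ≤ liminf (fun k => ENNReal.ofReal (C (ns k) - c * S (ns k))) atTop := by
      refine liminf_le_liminf (Eventually.of_forall fun k => ?_)
      exact ENNReal.ofReal_le_ofReal (hfn_bound (ns k))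
    refine this.trans ?_
    exact le_of_eq ((ENNReal.continuous_ofReal.tendsto L).comp hlim).liminf_eq
  have hQint : Integrable Q μ := by
    refine ⟨hQmeas, ?_⟩
    rw [hasFiniteIntegral_iff_norm]
    have : (∫⁻ x, ENNReal.ofReal ‖Q x‖ ∂μ) = ∫⁻ x, ENNReal.ofReal (Q x) ∂μ := by
      refine lintegral_congr_ae (hQ0.mono fun x hx => ?_)
      simp [Real.norm_eq_abs, abs_of_nonneg hx]
    rw [this]
    exact lt_of_le_of_lt key ENNReal.ofReal_lt_top
  have hQint_le : (∫ x, Q x ∂μ) ≤ L := by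
    rw [integral_eq_lintegral_of_nonneg_ae hQ0 hQmeas]
    calc (∫⁻ x, ENNReal.ofReal (Q x) ∂μ).toReal
        ≤ (ENNReal.ofReal L).toReal := ENNReal.toReal_mono ENNReal.ofReal_ne_top key
      _ = L := ENNReal.toReal_ofReal hL0
  -- conclusion
  have hsplit : (fun x => h x * φ x ^ 2) = fun x => Q x + c * φ x ^ 2 := by
    funext x; simp only [hQdef, hqdef]; ring
  have hcφ_int : Integrable (fun x => c * φ x ^ 2) μ := (hφ2.integrable_sq).const_mul c
  constructor
  · show Integrable _ μ
    rw [hsplit]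
    exact hQint.add hcφ_int
  · show (∫ x, h x * φ x ^ 2 ∂μ) ≤ ∫ x, ‖gradient φ x‖ ^ 2 ∂μ
    rw [hsplit, integral_add hQint hcφ_int, integral_const_mul]
    have : (∫ x, ‖gradient φ x‖ ^ 2 ∂μ) = Cφ := rfl
    rw [this]
    simp only [hLdef] at hQint_le
    linarith [hQint_le]


end
end

section
/- Let Ω be an open set of ℝ^N, N ≥ 1, and let f ∈ C¹([0,∞)) be convex. Let u, v ∈ H¹(Ω) satisfy f(u), f(v) ∈ L¹_loc(Ω), (u−v)⁺ ∈ H¹₀(Ω), 0 ≤ v and 0 ≤ u a.e. in Ω. Assume also that f′(u) ∈ L¹_loc(Ω) and ∫_Ω f′(u)φ² ≤ ∫_Ω |∇φ|² for all φ ∈ C_c^∞(Ω). Then (f(u) − f(v))(u−v)⁺ ∈ L¹(Ω). -/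
open MeasureTheory Set Filter Metric

noncomputable section

variable {N : ℕ}

private lemma aux_memL2 {N : ℕ} {Ω : Set (EuclideanSpace ℝ (Fin N))}
    {φ : EuclideanSpace ℝ (Fin N) → ℝ}
    (h1 : ContDiff ℝ (⊤ : ℕ∞) φ) (h2 : HasCompactSupport φ) :
    MemLp φ 2 (volume.restrict Ω) ∧ MemLp (gradient φ) 2 (volume.restrict Ω) := by
  refine ⟨(h1.continuous.memLp_of_hasCompactSupport h2).restrict Ω, ?_⟩
  have hgc : Continuous (gradient φ) :=
    (InnerProductSpace.toDual ℝ _).symm.continuous.comp (h1.continuous_fderiv (by simp))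
  have hgs : HasCompactSupport (gradient φ) := by
    have h3 := (h2.fderiv (𝕜 := ℝ)).comp_left
      (g := fun L : (EuclideanSpace ℝ (Fin N)) →L[ℝ] ℝ =>
        (InnerProductSpace.toDual ℝ (EuclideanSpace ℝ (Fin N))).symm L) (by simp)
    exact h3
  exact (hgc.memLp_of_hasCompactSupport hgs).restrict Ω

private lemma aux_mul_sq_integrable {N : ℕ} {Ω : Set (EuclideanSpace ℝ (Fin N))}
    {h φ : EuclideanSpace ℝ (Fin N) → ℝ}
    (hh : LocallyIntegrableOn h Ω volume) (hφc : Continuous φ)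
    (hφs : HasCompactSupport φ) (hsub : tsupport φ ⊆ Ω) :
    IntegrableOn (fun x => h x * φ x ^ 2) Ω volume := by
  have hK : IsCompact (tsupport φ) := hφs
  have h1 : IntegrableOn h (tsupport φ) volume := hh.integrableOn_compact_subset hsub hK
  obtain ⟨C, hC⟩ := hφs.exists_bound_of_continuous hφc
  have h2 : Integrable (fun x => φ x ^ 2 * h x) (volume.restrict (tsupport φ)) := by
    refine h1.bdd_mul ((hφc.pow 2).aestronglyMeasurable) (c := C ^ 2) (Eventually.of_forall fun x => ?_)
    have := hC x
    have h0 : (0:ℝ) ≤ ‖φ x‖ := norm_nonneg _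
    rw [Real.norm_eq_abs, abs_of_nonneg (sq_nonneg _)]
    calc φ x ^ 2 = ‖φ x‖ ^ 2 := by rw [Real.norm_eq_abs, sq_abs]
      _ ≤ C ^ 2 := by nlinarith
  have h3 : IntegrableOn (fun x => h x * φ x ^ 2) (tsupport φ) volume := by
    exact (by simpa [mul_comm] using h2 : Integrable (fun x => h x * φ x ^ 2) (volume.restrict (tsupport φ)))
  have hsupp : Function.support (fun x => h x * φ x ^ 2) ⊆ tsupport φ := by
    intro x hx
    by_contra hx'
    apply hx
    simp [image_eq_zero_of_notMem_tsupport hx']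
  exact ((integrableOn_iff_integrable_of_support_subset hsupp).1 h3).integrableOn

private lemma aux_convex_bound {f : ℝ → ℝ} (hf1 : ContDiffOn ℝ 1 f (Ici 0))
    (hfconv : ConvexOn ℝ (Ici 0) f) {a b : ℝ} (ha : 0 ≤ a) (hb : 0 ≤ b) :
    |(f a - f b) * max (a - b) 0| ≤
      (derivWithin f (Ici 0) a - derivWithin f (Ici 0) 0) * max (a - b) 0 ^ 2 +
        |derivWithin f (Ici 0) 0| * max (a - b) 0 ^ 2 := by
  have hd : DifferentiableOn ℝ f (Ici 0) := hf1.differentiableOn one_ne_zero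
  have hmono : MonotoneOn (derivWithin f (Ici 0)) (Ici 0) := hfconv.monotoneOn_derivWithin hd
  have h0a : derivWithin f (Ici 0) 0 ≤ derivWithin f (Ici 0) a := hmono self_mem_Ici ha ha
  rcases le_or_gt a b with hab | hba
  · rw [max_eq_right (by linarith)]
    simpa using add_nonneg (mul_nonneg (by linarith) (sq_nonneg (0:ℝ)))
      (mul_nonneg (abs_nonneg _) (sq_nonneg (0:ℝ)))
  · have ht0 : 0 < a - b := by linarith
    rw [max_eq_left ht0.le]
    have h0b : derivWithin f (Ici 0) 0 ≤ derivWithin f (Ici 0) b := hmono self_mem_Ici hb hb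
    have hs1 : slope f b a ≤ derivWithin f (Ici 0) a :=
      hfconv.slope_le_derivWithin hb ha hba (hd a ha)
    have hs2 : derivWithin f (Ici 0) b ≤ slope f b a :=
      hfconv.derivWithin_le_slope hb ha hba (hd b hb)
    rw [slope_def_field] at hs1 hs2
    have hub : f a - f b ≤ derivWithin f (Ici 0) a * (a - b) := by
      have := (div_le_iff₀ ht0).1 hs1
      linarith
    have hlb : derivWithin f (Ici 0) b * (a - b) ≤ f a - f b := by
      have := (le_div_iff₀ ht0).1 hs2
      linarith
    rw [abs_mul, abs_of_pos ht0]
    rcases abs_cases (f a - f b) with ⟨he, h0⟩ | ⟨he, h0⟩ <;> rw [he] <;>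
      nlinarith [neg_abs_le (derivWithin f (Ici 0) 0), le_abs_self (derivWithin f (Ici 0) 0),
        mul_le_mul_of_nonneg_right hub ht0.le, mul_le_mul_of_nonneg_right hlb ht0.le,
        mul_le_mul_of_nonneg_right (mul_le_mul_of_nonneg_right h0b ht0.le) ht0.le,
        mul_le_mul_of_nonneg_right (mul_le_mul_of_nonneg_right h0a ht0.le) ht0.le,
        sq_nonneg (a - b)]
/-- Integrability of `(f(u) − f(v))(u − v)⁺` under the stability of `u`. -/
theorem integrability_of_difference_term
    {N : ℕ} (hN : 1 ≤ N) (Ω : Set (EuclideanSpace ℝ (Fin N))) (hΩ : IsOpen Ω)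
    (f : ℝ → ℝ) (hf1 : ContDiffOn ℝ 1 f (Ici 0)) (hfconv : ConvexOn ℝ (Ici 0) f)
    (u v : EuclideanSpace ℝ (Fin N) → ℝ) (huH1 : MemH1 Ω u) (hvH1 : MemH1 Ω v)
    (hfu : LocallyIntegrableOn (fun x => f (u x)) Ω volume)
    (hfv : LocallyIntegrableOn (fun x => f (v x)) Ω volume)
    (hdiff : MemH10 Ω (fun x => max (u x - v x) 0))
    (hpos : ∀ᵐ x ∂volume.restrict Ω, 0 ≤ v x ∧ 0 ≤ u x)
    (hfu' : LocallyIntegrableOn (fun x => derivWithin f (Ici 0) (u x)) Ω volume)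
    (hstab : ∀ φ : EuclideanSpace ℝ (Fin N) → ℝ, IsTestFun Ω φ →
      ∫ x in Ω, derivWithin f (Ici 0) (u x) * φ x ^ 2 ≤ ∫ x in Ω, ‖gradient φ x‖ ^ 2) :
    IntegrableOn (fun x => (f (u x) - f (v x)) * max (u x - v x) 0) Ω volume := by
  classical
  set w : EuclideanSpace ℝ (Fin N) → ℝ := fun x => max (u x - v x) 0 with hw
  obtain ⟨⟨hwL2, hgwL2⟩, φ, hφt, hφconv⟩ := hdiff
  set c := derivWithin f (Ici 0) 0 with hc
  set g' : EuclideanSpace ℝ (Fin N) → ℝ := fun x => derivWithin f (Ici 0) (u x) with hg'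
  have hg'm : AEStronglyMeasurable g' (volume.restrict Ω) := hfu'.aestronglyMeasurable
  have hd : DifferentiableOn ℝ f (Ici 0) := hf1.differentiableOn one_ne_zero
  have hmono : MonotoneOn (derivWithin f (Ici 0)) (Ici 0) := hfconv.monotoneOn_derivWithin hd
  have hg'c : ∀ᵐ x ∂volume.restrict Ω, c ≤ g' x := by
    filter_upwards [hpos] with x hx using hmono self_mem_Ici hx.2 hx.2
  -- L² facts
  have hφm : ∀ n, MemLp (φ n) 2 (volume.restrict Ω) := fun n =>
    (aux_memL2 (hφt n).1 (hφt n).2.1).1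
  have hgφm : ∀ n, MemLp (gradient (φ n)) 2 (volume.restrict Ω) := fun n =>
    (aux_memL2 (hφt n).1 (hφt n).2.1).2
  have intA : ∀ n, Integrable (fun x => (w x - φ n x) ^ 2) (volume.restrict Ω) := fun n =>
    (hwL2.sub (hφm n)).integrable_sq
  have intB : ∀ n, Integrable (fun x => ‖gradient w x - gradient (φ n) x‖ ^ 2)
      (volume.restrict Ω) := fun n => by
    have h := hgwL2.sub (hgφm n)
    exact (memLp_two_iff_integrable_sq_norm h.1).1 h
  have intgw : Integrable (fun x => ‖gradient w x‖ ^ 2) (volume.restrict Ω) :=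
    (memLp_two_iff_integrable_sq_norm hgwL2.1).1 hgwL2
  have intgφ : ∀ n, Integrable (fun x => ‖gradient (φ n) x‖ ^ 2) (volume.restrict Ω) := fun n =>
    (memLp_two_iff_integrable_sq_norm (hgφm n).1).1 (hgφm n)
  have intw2 : Integrable (fun x => w x ^ 2) (volume.restrict Ω) := hwL2.integrable_sq
  have intφ2 : ∀ n, Integrable (fun x => φ n x ^ 2) (volume.restrict Ω) := fun n =>
    (hφm n).integrable_sq
  -- split the H¹ convergence
  set A := fun n => ∫ x in Ω, (w x - φ n x) ^ 2 with hA
  set B := fun n => ∫ x in Ω, ‖gradient w x - gradient (φ n) x‖ ^ 2 with hB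
  have hAB : Tendsto (fun n => A n + B n) atTop (nhds 0) := by
    refine hφconv.congr fun n => ?_
    exact integral_add (intA n) (intB n)
  have hA0 : Tendsto A atTop (nhds 0) :=
    squeeze_zero (fun n => integral_nonneg fun x => sq_nonneg _)
      (fun n => le_add_of_nonneg_right (integral_nonneg fun x => sq_nonneg _)) hAB
  have hB0 : Tendsto B atTop (nhds 0) :=
    squeeze_zero (fun n => integral_nonneg fun x => sq_nonneg _)
      (fun n => le_add_of_nonneg_left (integral_nonneg fun x => sq_nonneg _)) hAB
  -- convergence in measure
  have htim : TendstoInMeasure (volume.restrict Ω) φ atTop w := by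
    rw [tendstoInMeasure_iff_dist]
    intro ε hε
    have hεsq : (0:ℝ) < ε ^ 2 := by positivity
    have hle : ∀ n, (volume.restrict Ω) {x | ε ≤ dist (φ n x) (w x)} ≤
        ENNReal.ofReal (A n) / ENNReal.ofReal (ε ^ 2) := by
      intro n
      have hsub2 : {x | ε ≤ dist (φ n x) (w x)} ⊆
          {x | ENNReal.ofReal (ε ^ 2) ≤ ENNReal.ofReal ((w x - φ n x) ^ 2)} := by
        intro x hx
        simp only [mem_setOf_eq] at hx ⊢
        apply ENNReal.ofReal_le_ofReal
        rw [Real.dist_eq] at hx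
        nlinarith [abs_nonneg (φ n x - w x), sq_abs (φ n x - w x)]
      have hm : AEMeasurable (fun x => ENNReal.ofReal ((w x - φ n x) ^ 2))
          (volume.restrict Ω) :=
        ENNReal.measurable_ofReal.comp_aemeasurable (intA n).aestronglyMeasurable.aemeasurable
      calc (volume.restrict Ω) {x | ε ≤ dist (φ n x) (w x)}
          ≤ (volume.restrict Ω) {x | ENNReal.ofReal (ε ^ 2) ≤
              ENNReal.ofReal ((w x - φ n x) ^ 2)} := measure_mono hsub2
        _ ≤ (∫⁻ x in Ω, ENNReal.ofReal ((w x - φ n x) ^ 2)) / ENNReal.ofReal (ε ^ 2) :=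
            meas_ge_le_lintegral_div hm (ENNReal.ofReal_pos.mpr hεsq).ne' ENNReal.ofReal_ne_top
        _ = ENNReal.ofReal (A n) / ENNReal.ofReal (ε ^ 2) := by
            rw [ofReal_integral_eq_lintegral_ofReal (intA n)
              (Eventually.of_forall fun x => sq_nonneg _)]
    have hdiv : Tendsto (fun n => ENNReal.ofReal (A n) / ENNReal.ofReal (ε ^ 2)) atTop
        (nhds 0) := by
      have h1 : Tendsto (fun n => ENNReal.ofReal (A n)) atTop (nhds 0) := by
        simpa using ENNReal.tendsto_ofReal hA0
      have ha : ((ENNReal.ofReal (ε ^ 2))⁻¹ : ENNReal) ≠ ⊤ :=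
        ENNReal.inv_ne_top.mpr (ENNReal.ofReal_pos.mpr hεsq).ne'
      simpa [ENNReal.div_eq_inv_mul] using ENNReal.Tendsto.const_mul h1 (Or.inr ha)
    exact tendsto_of_tendsto_of_tendsto_of_le_of_le tendsto_const_nhds hdiv
      (fun n => zero_le) hle
  obtain ⟨ns, hns, hae⟩ := htim.exists_seq_tendsto_ae
  -- integrability of the stability integrands
  have hφint : ∀ n, Integrable (fun x => g' x * φ n x ^ 2) (volume.restrict Ω) := fun n =>
    aux_mul_sq_integrable hfu' (hφt n).1.continuous (hφt n).2.1 (hφt n).2.2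
  have hSint : ∀ n, Integrable (fun x => (g' x - c) * φ n x ^ 2) (volume.restrict Ω) := by
    intro n
    have he : (fun x => (g' x - c) * φ n x ^ 2) =
        fun x => g' x * φ n x ^ 2 - c * φ n x ^ 2 := by funext x; ring
    rw [he]
    exact (hφint n).sub ((intφ2 n).const_mul c)
  -- eventual smallness
  have hev : ∀ᶠ n in atTop, A n ≤ 1 ∧ B n ≤ 1 := by
    filter_upwards [hA0.eventually (eventually_le_nhds zero_lt_one),
      hB0.eventually (eventually_le_nhds zero_lt_one)] with n h1 h2
    exact ⟨h1, h2⟩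
  obtain ⟨n₀, hn₀⟩ := eventually_atTop.1 hev
  set Gw := ∫ x in Ω, ‖gradient w x‖ ^ 2 with hGw
  set Ww := ∫ x in Ω, w x ^ 2 with hWw
  set Bd := (2 + 2 * Gw) + |c| * (2 + 2 * Ww) with hBd
  have hSbound : ∀ n, n₀ ≤ n → ∫ x in Ω, (g' x - c) * φ n x ^ 2 ≤ Bd := by
    intro n hn
    have hst := hstab (φ n) (hφt n)
    have hφ2 : ∫ x in Ω, φ n x ^ 2 ≤ 2 * A n + 2 * Ww := by
      have hint2 : Integrable (fun x => 2 * (w x - φ n x) ^ 2 + 2 * w x ^ 2)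
          (volume.restrict Ω) := ((intA n).const_mul 2).add (intw2.const_mul 2)
      calc ∫ x in Ω, φ n x ^ 2
          ≤ ∫ x in Ω, (2 * (w x - φ n x) ^ 2 + 2 * w x ^ 2) :=
            integral_mono (intφ2 n) hint2 fun x => by nlinarith [sq_nonneg (w x - φ n x + w x)]
        _ = 2 * A n + 2 * Ww := by
            rw [integral_add ((intA n).const_mul 2) (intw2.const_mul 2),
              integral_const_mul, integral_const_mul]
    have hgφ2 : ∫ x in Ω, ‖gradient (φ n) x‖ ^ 2 ≤ 2 * B n + 2 * Gw := by
      have hint2 : Integrable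
          (fun x => 2 * ‖gradient w x - gradient (φ n) x‖ ^ 2 + 2 * ‖gradient w x‖ ^ 2)
          (volume.restrict Ω) := ((intB n).const_mul 2).add (intgw.const_mul 2)
      have hpt : ∀ x, ‖gradient (φ n) x‖ ^ 2 ≤
          2 * ‖gradient w x - gradient (φ n) x‖ ^ 2 + 2 * ‖gradient w x‖ ^ 2 := by
        intro x
        have h1 : ‖gradient (φ n) x‖ ≤
            ‖gradient w x - gradient (φ n) x‖ + ‖gradient w x‖ := by
          calc ‖gradient (φ n) x‖
              = ‖gradient w x - (gradient w x - gradient (φ n) x)‖ := by rw [sub_sub_cancel]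
            _ ≤ ‖gradient w x‖ + ‖gradient w x - gradient (φ n) x‖ := norm_sub_le _ _
            _ = _ := add_comm _ _
        nlinarith [h1, norm_nonneg (gradient (φ n) x),
          sq_nonneg (‖gradient w x - gradient (φ n) x‖ - ‖gradient w x‖),
          norm_nonneg (gradient w x - gradient (φ n) x), norm_nonneg (gradient w x)]
      calc ∫ x in Ω, ‖gradient (φ n) x‖ ^ 2
          ≤ ∫ x in Ω, (2 * ‖gradient w x - gradient (φ n) x‖ ^ 2 + 2 * ‖gradient w x‖ ^ 2) :=
            integral_mono (intgφ n) hint2 hpt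
        _ = 2 * B n + 2 * Gw := by
            rw [integral_add ((intB n).const_mul 2) (intgw.const_mul 2),
              integral_const_mul, integral_const_mul]
    have hφ2nn : (0:ℝ) ≤ ∫ x in Ω, φ n x ^ 2 := integral_nonneg fun x => sq_nonneg _
    have hSeq : ∫ x in Ω, (g' x - c) * φ n x ^ 2 =
        (∫ x in Ω, g' x * φ n x ^ 2) - c * ∫ x in Ω, φ n x ^ 2 := by
      have he : (fun x => (g' x - c) * φ n x ^ 2) =
          fun x => g' x * φ n x ^ 2 - c * φ n x ^ 2 := by funext x; ring
      rw [he, integral_sub (hφint n) ((intφ2 n).const_mul c), integral_const_mul]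
    have hcφ : -(c * ∫ x in Ω, φ n x ^ 2) ≤ |c| * (2 * A n + 2 * Ww) := by
      have h1 : -(c * ∫ x in Ω, φ n x ^ 2) ≤ |c| * ∫ x in Ω, φ n x ^ 2 := by
        nlinarith [neg_abs_le c, le_abs_self c]
      exact h1.trans (mul_le_mul_of_nonneg_left hφ2 (abs_nonneg c))
    have hA1 := (hn₀ n hn).1
    have hB1 := (hn₀ n hn).2
    rw [hSeq, hBd]
    have : (∫ x in Ω, g' x * φ n x ^ 2) ≤ 2 * B n + 2 * Gw := hst.trans hgφ2
    nlinarith [abs_nonneg c]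
  -- shifted subsequence
  set m : ℕ → ℕ := fun k => ns (k + n₀) with hm
  have hmge : ∀ k, n₀ ≤ m k := fun k =>
    le_trans (Nat.le_add_left n₀ k) (hns.le_apply)
  have haem : ∀ᵐ x ∂volume.restrict Ω, Tendsto (fun k => φ (m k) x) atTop (nhds (w x)) := by
    filter_upwards [hae] with x hx
    exact hx.comp (tendsto_add_atTop_nat n₀)
  -- Fatou
  have hGmeas : ∀ k, AEMeasurable (fun x => ENNReal.ofReal ((g' x - c) * φ (m k) x ^ 2))
      (volume.restrict Ω) := fun k =>
    ENNReal.measurable_ofReal.comp_aemeasurable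
      ((hg'm.aemeasurable.sub aemeasurable_const).mul
        (((hφt (m k)).1.continuous.pow 2).aemeasurable))
  have hSnn : ∀ k, (fun _ => (0:ℝ)) ≤ᵐ[volume.restrict Ω] fun x => (g' x - c) * φ (m k) x ^ 2 := by
    intro k
    filter_upwards [hg'c] with x hx
    exact mul_nonneg (sub_nonneg.2 hx) (sq_nonneg _)
  have hGk : ∀ k, (∫⁻ x in Ω, ENNReal.ofReal ((g' x - c) * φ (m k) x ^ 2)) ≤
      ENNReal.ofReal Bd := by
    intro k
    rw [← ofReal_integral_eq_lintegral_ofReal (hSint (m k)) (hSnn k)]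
    exact ENNReal.ofReal_le_ofReal (hSbound (m k) (hmge k))
  have hfatou : (∫⁻ x in Ω, ENNReal.ofReal ((g' x - c) * w x ^ 2)) ≤ ENNReal.ofReal Bd := by
    have heq : (∫⁻ x in Ω, ENNReal.ofReal ((g' x - c) * w x ^ 2)) =
        ∫⁻ x in Ω, liminf (fun k => ENNReal.ofReal ((g' x - c) * φ (m k) x ^ 2)) atTop := by
      refine lintegral_congr_ae ?_
      filter_upwards [haem] with x hx
      have ht : Tendsto (fun k => ENNReal.ofReal ((g' x - c) * φ (m k) x ^ 2)) atTop
          (nhds (ENNReal.ofReal ((g' x - c) * w x ^ 2))) :=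
        ENNReal.tendsto_ofReal (((hx.pow 2).const_mul (g' x - c)))
      exact ht.liminf_eq.symm
    rw [heq]
    refine le_trans (lintegral_liminf_le' hGmeas) ?_
    exact liminf_le_of_le (by isBoundedDefault) (fun b hb => by
      obtain ⟨k, hk⟩ := hb.exists
      exact hk.trans (hGk k))
  -- integrability of (g' - c) * w ^ 2
  have hwm2 : AEStronglyMeasurable (fun x => w x ^ 2) (volume.restrict Ω) := by
    have := hwL2.1.mul hwL2.1
    exact intw2.aestronglyMeasurable
  have hhnn : (fun _ => (0:ℝ)) ≤ᵐ[volume.restrict Ω] fun x => (g' x - c) * w x ^ 2 := by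
    filter_upwards [hg'c] with x hx
    exact mul_nonneg (sub_nonneg.2 hx) (sq_nonneg _)
  have hhint : Integrable (fun x => (g' x - c) * w x ^ 2) (volume.restrict Ω) := by
    refine ⟨(hg'm.sub aestronglyMeasurable_const).mul hwm2, ?_⟩
    rw [hasFiniteIntegral_iff_norm]
    have heq2 : (∫⁻ x in Ω, ENNReal.ofReal ‖(g' x - c) * w x ^ 2‖) =
        ∫⁻ x in Ω, ENNReal.ofReal ((g' x - c) * w x ^ 2) := by
      refine lintegral_congr_ae ?_
      filter_upwards [hhnn] with x hx
      rw [Real.norm_eq_abs, abs_of_nonneg hx]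
    rw [heq2]
    exact lt_of_le_of_lt hfatou ENNReal.ofReal_lt_top
  -- final domination
  have hFmeas : AEStronglyMeasurable (fun x => (f (u x) - f (v x)) * w x)
      (volume.restrict Ω) :=
    (hfu.aestronglyMeasurable.sub hfv.aestronglyMeasurable).mul hwL2.1
  have hbd : Integrable (fun x => (g' x - c) * w x ^ 2 + |c| * w x ^ 2)
      (volume.restrict Ω) := hhint.add (intw2.const_mul |c|)
  refine hbd.mono' hFmeas ?_
  filter_upwards [hpos] with x hx
  have hb := aux_convex_bound hf1 hfconv hx.2 hx.1
  rw [Real.norm_eq_abs]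
  exact hb

end
end

section
/- Let f ∈ C¹([0,∞)) be positive, nondecreasing and convex, and for ε ∈ (0,1) define Φ_ε : [0,∞) → [0,∞) by ∫₀^{Φ_ε(t)} ds/f(s) = (1−ε)∫₀^t ds/f(s). Then Φ_ε ∈ C²([0,∞)), Φ_ε solves Φ_ε′(t) f(t) = (1−ε) f(Φ_ε(t)) with Φ_ε(0) = 0, Φ_ε is increasing and concave, 0 < Φ_ε′(t) < 1 for all t > 0, 0 ≤ Φ_ε(t) ≤ t for all t ≥ 0, Φ_ε′(0) = 1−ε, Φ_ε″(0) = −ε(1−ε)f′(0)/f(0), and there exists a constant C = C(f) > 0, depending only on f, such that 0 ≤ f(Φ_ε(t)) ≤ (C/ε)(1+t) for all t ≥ 0. -/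
open MeasureTheory Set Filter Metric
open Topology

noncomputable section

variable {N : ℕ}

/-- Properties of the flow map `Φ_ε` defined by
`∫₀^{Φ_ε(t)} ds/f(s) = (1−ε) ∫₀^t ds/f(s)` for positive nondecreasing convex `f`. -/
theorem flow_map_properties
    (f : ℝ → ℝ) (hf1 : ContDiffOn ℝ 1 f (Ici 0)) (hfpos : ∀ t ∈ Ici (0 : ℝ), 0 < f t)
    (hfmono : MonotoneOn f (Ici 0)) (hfconv : ConvexOn ℝ (Ici 0) f)
    (ε : ℝ) (hε : ε ∈ Ioo (0 : ℝ) 1)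
    (Φ : ℝ → ℝ) (hΦnonneg : ∀ t ∈ Ici (0 : ℝ), 0 ≤ Φ t)
    (hΦdef : ∀ t ∈ Ici (0 : ℝ),
      (∫ s in (0 : ℝ)..(Φ t), 1 / f s) = (1 - ε) * ∫ s in (0 : ℝ)..t, 1 / f s) :
    ContDiffOn ℝ 2 Φ (Ici 0) ∧
    Φ 0 = 0 ∧
    (∀ t ∈ Ici (0 : ℝ), derivWithin Φ (Ici 0) t * f t = (1 - ε) * f (Φ t)) ∧
    StrictMonoOn Φ (Ici 0) ∧
    ConcaveOn ℝ (Ici 0) Φ ∧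
    (∀ t : ℝ, 0 < t → 0 < derivWithin Φ (Ici 0) t ∧ derivWithin Φ (Ici 0) t < 1) ∧
    (∀ t ∈ Ici (0 : ℝ), 0 ≤ Φ t ∧ Φ t ≤ t) ∧
    derivWithin Φ (Ici 0) 0 = 1 - ε ∧
    derivWithin (derivWithin Φ (Ici 0)) (Ici 0) 0 =
      -ε * (1 - ε) * derivWithin f (Ici 0) 0 / f 0 ∧
    ∃ C : ℝ, 0 < C ∧ ∀ t ∈ Ici (0 : ℝ), 0 ≤ f (Φ t) ∧ f (Φ t) ≤ C / ε * (1 + t) := by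
  obtain ⟨hε0, hε1⟩ := hε
  have h1ε : (0:ℝ) < 1 - ε := by linarith
  have hfc : ContinuousOn f (Ici 0) := hf1.continuousOn
  have hfne : ∀ t ∈ Ici (0:ℝ), f t ≠ 0 := fun t ht => (hfpos t ht).ne'
  have hgc : ContinuousOn (fun s => 1 / f s) (Ici (0:ℝ)) :=
    continuousOn_const.div hfc hfne
  have hint : ∀ a b : ℝ, 0 ≤ a → 0 ≤ b →
      IntervalIntegrable (fun s => 1 / f s) volume a b := by
    intro a b ha hb
    exact (hgc.mono (fun x hx => le_trans (le_min ha hb) hx.1)).intervalIntegrable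
  set h : ℝ → ℝ := fun t => ∫ s in (0:ℝ)..t, 1 / f s with hW
  have hΦh : ∀ t ∈ Ici (0:ℝ), h (Φ t) = (1 - ε) * h t := fun t ht => hΦdef t ht
  have hΦmaps : MapsTo Φ (Ici 0) (Ici (0:ℝ)) := fun t ht => hΦnonneg t ht
  -- h is strictly monotone on [0, ∞)
  have hadd : ∀ a b : ℝ, 0 ≤ a → 0 ≤ b → h a + (∫ s in a..b, 1 / f s) = h b := by
    intro a b ha hb
    exact intervalIntegral.integral_add_adjacent_intervals (hint 0 a le_rfl ha) (hint a b ha hb)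
  have hmonoh : StrictMonoOn h (Ici 0) := by
    intro a ha b hb hab
    have hpos : 0 < ∫ s in a..b, 1 / f s := by
      apply intervalIntegral.intervalIntegral_pos_of_pos_on (hint a b ha hb)
      · intro x hx
        exact div_pos one_pos (hfpos x (le_trans ha hx.1.le))
      · exact hab
    have := hadd a b ha hb
    linarith
  have h0 : h 0 = 0 := intervalIntegral.integral_same
  have hΦ0 : Φ 0 = 0 := by
    have h1 : h (Φ 0) = 0 := by
      rw [hΦh 0 self_mem_Ici, h0]; ring
    have := hmonoh.injOn (hΦnonneg 0 self_mem_Ici) (self_mem_Ici) (by rw [h1, h0])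
    exact this
  have hΦmono : StrictMonoOn Φ (Ici 0) := by
    intro a ha b hb hab
    have : h (Φ a) < h (Φ b) := by
      rw [hΦh a ha, hΦh b hb]
      exact (mul_lt_mul_iff_right₀ h1ε).2 (hmonoh ha hb hab)
    by_contra hc
    exact absurd (hmonoh.monotoneOn (hΦnonneg b hb) (hΦnonneg a ha) (not_lt.1 hc)) (not_le.2 this)
  have hhnonneg : ∀ t ∈ Ici (0:ℝ), 0 ≤ h t := by
    intro t ht
    rcases eq_or_lt_of_le (mem_Ici.1 ht) with rfl | ht'
    · simp [h0]
    · have := hmonoh self_mem_Ici ht ht'; linarith [h0]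
  have hΦle : ∀ t ∈ Ici (0:ℝ), Φ t ≤ t := by
    intro t ht
    by_contra hc
    have h1 : h t < h (Φ t) := hmonoh ht (hΦnonneg t ht) (not_le.1 hc)
    rw [hΦh t ht] at h1
    nlinarith [hhnonneg t ht]
  -- derivative of h
  have hHd : ∀ t ∈ Ici (0:ℝ), HasDerivWithinAt h (1 / f t) (Ici 0) t := by
    intro t ht
    have hmeasI : AEStronglyMeasurable (fun s => 1 / f s) (volume.restrict (Ici 0)) :=
      hgc.aestronglyMeasurable measurableSet_Ici
    rcases eq_or_lt_of_le (mem_Ici.1 ht) with rfl | ht'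
    · exact intervalIntegral.integral_hasDerivWithinAt_right (hint 0 0 le_rfl le_rfl)
        ⟨Ici 0, nhdsWithin_mono 0 Ioi_subset_Ici_self self_mem_nhdsWithin, hmeasI⟩
        ((hgc 0 self_mem_Ici).mono Ioi_subset_Ici_self)
    · have hct : ContinuousAt (fun s => 1 / f s) t :=
        hgc.continuousAt (Ici_mem_nhds ht')
    -- global derivative at interior points
      exact (intervalIntegral.integral_hasDerivAt_right (hint 0 t le_rfl ht)
        ⟨Ici 0, Ici_mem_nhds ht', hmeasI⟩ hct).hasDerivWithinAt
  have hhc : ContinuousOn h (Ici 0) := fun t ht => (hHd t ht).continuousWithinAt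
  -- continuity of Φ
  have hΦcont : ContinuousOn Φ (Ici 0) := by
    intro a ha
    have hright : ContinuousWithinAt Φ (Ici a) a := by
      apply hΦmono.continuousWithinAt_right_of_exists_between
        (mem_of_superset self_mem_nhdsWithin (Ici_subset_Ici.2 ha))
      intro b hb
      have hb0 : (0:ℝ) ≤ b := le_of_lt (lt_of_le_of_lt (hΦnonneg a ha) hb)
      have hab : h (Φ a) < h b := hmonoh (hΦnonneg a ha) hb0 hb
      have hca : Tendsto (fun t => (1 - ε) * h t) (𝓝[Ici 0] a) (𝓝 ((1 - ε) * h a)) :=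
        (hhc a ha).const_mul (1 - ε)
      rw [← hΦh a ha] at hca
      have hev : ∀ᶠ t in 𝓝[>] a, (1 - ε) * h t < h b :=
        (hca.eventually_lt_const hab).filter_mono
          (nhdsWithin_mono a (fun x hx => le_trans ha (mem_Ioi.1 hx).le))
      obtain ⟨t, htlt, hta⟩ := (hev.and self_mem_nhdsWithin).exists
      have ht0 : (0:ℝ) ≤ t := le_trans ha hta.le
      refine ⟨t, ht0, hΦmono ha ht0 hta, ?_⟩
      by_contra hc
      have := hmonoh hb0 (hΦnonneg t ht0) (not_le.1 hc)
      rw [hΦh t ht0] at this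
      linarith
    rcases eq_or_lt_of_le (mem_Ici.1 ha) with rfl | ha0
    · exact hright
    have hleft : ContinuousWithinAt Φ (Iic a) a := by
      apply hΦmono.continuousWithinAt_left_of_exists_between
        (mem_nhdsWithin_of_mem_nhds (Ici_mem_nhds ha0))
      intro b hb
      rcases lt_or_ge b 0 with hb0 | hb0
      · have ha2 : a / 2 ∈ Ici (0:ℝ) := mem_Ici.2 (by positivity)
        exact ⟨a / 2, ha2, (lt_of_lt_of_le hb0 (hΦnonneg _ ha2)).le,
          hΦmono ha2 ha (half_lt_self ha0)⟩
      · have hab : h b < h (Φ a) := hmonoh hb0 (hΦnonneg a ha) hb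
        have hca : Tendsto (fun t => (1 - ε) * h t) (𝓝[Iio a ∩ Ici 0] a) (𝓝 ((1 - ε) * h a)) :=
          ((hhc a ha).const_mul (1 - ε)).mono_left
            (nhdsWithin_mono a (fun x hx => hx.2))
        rw [← hΦh a ha] at hca
      -- the filter 𝓝[Iio a ∩ Ici 0] a is nontrivial since 0 < a
        have hne : (𝓝[Iio a ∩ Ici 0] a).NeBot :=
          (right_nhdsWithin_Ioo_neBot ha0).mono
            (nhdsWithin_mono a (fun x hx => ⟨hx.2, hx.1.le⟩))
        have hev := (hca.eventually_const_lt hab).and self_mem_nhdsWithin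
        obtain ⟨t, htlt, hta, ht0⟩ := hev.exists
        refine ⟨t, ht0, ?_, hΦmono ht0 ha hta⟩
        by_contra hc
        have := hmonoh.monotoneOn (hΦnonneg t ht0) hb0 (not_le.1 hc).le
        rw [hΦh t ht0] at this
        linarith
    exact (hright.union hleft).mono
      (fun x _ => by rcases le_total a x with hx | hx; exacts [Or.inl hx, Or.inr hx])
  -- differentiability of Φ
  have hG : ∀ t ∈ Ici (0:ℝ), HasDerivWithinAt Φ ((1 - ε) * f (Φ t) / f t) (Ici 0) t := by
    intro t₀ ht₀
    have hΦt₀ : Φ t₀ ∈ Ici (0:ℝ) := hΦnonneg t₀ ht₀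
    rw [hasDerivWithinAt_iff_tendsto_slope]
    -- limit of slopes of h ∘ Φ
    have hA : Tendsto (fun t => slope (fun u => h (Φ u)) t₀ t) (𝓝[Ici 0 \ {t₀}] t₀)
        (𝓝 ((1 - ε) * (1 / f t₀))) := by
      have h1 : HasDerivWithinAt (fun u => (1 - ε) * h u) ((1 - ε) * (1 / f t₀)) (Ici 0) t₀ :=
        (hHd t₀ ht₀).const_mul (1 - ε)
      have h2 := hasDerivWithinAt_iff_tendsto_slope.1 h1
      refine h2.congr' ?_
      filter_upwards [self_mem_nhdsWithin] with t ht
      simp only [slope_def_field, hΦh t ht.1, hΦh t₀ ht₀]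
    -- limit of slopes of h between Φ t₀ and Φ t
    have hB : Tendsto (fun t => slope h (Φ t₀) (Φ t)) (𝓝[Ici 0 \ {t₀}] t₀)
        (𝓝 (1 / f (Φ t₀))) := by
      have h1 := hasDerivWithinAt_iff_tendsto_slope.1 (hHd (Φ t₀) hΦt₀)
      refine h1.comp ?_
      rw [tendsto_nhdsWithin_iff]
      constructor
      · exact (hΦcont t₀ ht₀).mono_left (nhdsWithin_mono _ diff_subset)
      · filter_upwards [self_mem_nhdsWithin] with t ht
        exact ⟨hΦnonneg t ht.1, fun hc => ht.2 (hΦmono.injOn ht.1 ht₀ hc)⟩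
    have hBne : 1 / f (Φ t₀) ≠ 0 := one_div_ne_zero (hfne _ hΦt₀)
    have hC := hA.div hB hBne
    have hval : (1 - ε) * (1 / f t₀) / (1 / f (Φ t₀)) = (1 - ε) * f (Φ t₀) / f t₀ := by
      field_simp
    rw [hval] at hC
    refine hC.congr' ?_
    filter_upwards [self_mem_nhdsWithin] with t ht
    have htne : t ≠ t₀ := ht.2
    have hΦne : Φ t ≠ Φ t₀ := fun hc => ht.2 (hΦmono.injOn ht.1 ht₀ hc)
    show _ = slope Φ t₀ t
    have hnum : h (Φ t) - h (Φ t₀) ≠ 0 := by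
      rcases lt_or_gt_of_ne hΦne with hlt | hlt
      · exact ne_of_lt (sub_neg.2 (hmonoh (hΦnonneg t ht.1) hΦt₀ hlt))
      · exact ne_of_gt (sub_pos.2 (hmonoh hΦt₀ (hΦnonneg t ht.1) hlt))
    simp only [Pi.div_apply, slope_def_field]
    rw [div_div_div_eq]
    rw [div_eq_div_iff (by simp [sub_ne_zero.2 htne, hnum]) (sub_ne_zero.2 htne)]
    ring
  have hderiv : ∀ t ∈ Ici (0:ℝ), derivWithin Φ (Ici 0) t = (1 - ε) * f (Φ t) / f t :=
    fun t ht => (hG t ht).derivWithin (uniqueDiffOn_Ici 0 t ht)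
  have hΦdiff : DifferentiableOn ℝ Φ (Ici 0) := fun t ht => (hG t ht).differentiableWithinAt
  have hfd : DifferentiableOn ℝ f (Ici 0) := hf1.differentiableOn one_ne_zero
  have hf'mono : MonotoneOn (derivWithin f (Ici 0)) (Ici 0) :=
    hfconv.monotoneOn_derivWithin hfd
  have hf'nonneg : ∀ x : ℝ, 0 < x → 0 ≤ derivWithin f (Ici 0) x := by
    intro x hx
    have hs := hfconv.slope_le_derivWithin self_mem_Ici (mem_Ici.2 hx.le) hx (hfd x hx.le)
    rw [slope_def_field] at hs
    have : 0 ≤ (f x - f 0) / (x - 0) := by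
      apply div_nonneg _ (by linarith)
      have := hfmono self_mem_Ici (mem_Ici.2 hx.le) hx.le
      linarith
    linarith
  -- continuity of the derivative formula
  have hGcont : ContinuousOn (fun t => (1 - ε) * f (Φ t) / f t) (Ici 0) :=
    (continuousOn_const.mul (hfc.comp hΦcont hΦmaps)).div hfc hfne
  -- Φ is C¹
  have hc1 : ContDiffOn ℝ 1 Φ (Ici 0) := by
    rw [show ((1 : WithTop ℕ∞)) = 0 + 1 by norm_num, contDiffOn_succ_iff_derivWithin (uniqueDiffOn_Ici 0)]
    refine ⟨hΦdiff, by simp, ?_⟩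
    rw [contDiffOn_zero]
    exact hGcont.congr (fun t ht => hderiv t ht)
  have hGc1 : ContDiffOn ℝ 1 (fun t => (1 - ε) * f (Φ t) / f t) (Ici 0) :=
    (contDiffOn_const.mul (hf1.comp hc1 hΦmaps)).div hf1 hfne
  have hc2 : ContDiffOn ℝ 2 Φ (Ici 0) := by
    rw [show ((2 : WithTop ℕ∞)) = 1 + 1 by norm_num, contDiffOn_succ_iff_derivWithin (uniqueDiffOn_Ici 0)]
    exact ⟨hΦdiff, by simp, hGc1.congr (fun t ht => hderiv t ht)⟩
  -- derivative of the derivative formula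
  have hfat : ∀ x ∈ Ici (0:ℝ), HasDerivWithinAt f (derivWithin f (Ici 0) x) (Ici 0) x :=
    fun x hx => (hfd x hx).hasDerivWithinAt
  have hG2 : ∀ t ∈ Ici (0:ℝ), HasDerivWithinAt (fun u => (1 - ε) * f (Φ u) / f u)
      (((1 - ε) * (derivWithin f (Ici 0) (Φ t) * ((1 - ε) * f (Φ t) / f t)) * f t -
        (1 - ε) * f (Φ t) * derivWithin f (Ici 0) t) / f t ^ 2) (Ici 0) t := by
    intro t ht
    have h1 : HasDerivWithinAt (fun u => f (Φ u))
        (derivWithin f (Ici 0) (Φ t) * ((1 - ε) * f (Φ t) / f t)) (Ici 0) t :=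
      HasDerivWithinAt.comp t (hfat (Φ t) (hΦnonneg t ht)) (hG t ht) hΦmaps
    exact ((h1.const_mul (1 - ε)).div (hfat t ht) (hfne t ht))
  -- second derivative is nonpositive on the interior
  have hG2le : ∀ t : ℝ, 0 < t →
      (((1 - ε) * (derivWithin f (Ici 0) (Φ t) * ((1 - ε) * f (Φ t) / f t)) * f t -
        (1 - ε) * f (Φ t) * derivWithin f (Ici 0) t) / f t ^ 2) ≤ 0 := by
    intro t ht
    have hΦt0 : 0 < Φ t := by
      have := hΦmono self_mem_Ici (mem_Ici.2 ht.le) ht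
      rwa [hΦ0] at this
    have hA := hf'nonneg (Φ t) hΦt0
    have hAB : derivWithin f (Ici 0) (Φ t) ≤ derivWithin f (Ici 0) t :=
      hf'mono (mem_Ici.2 hΦt0.le) (mem_Ici.2 ht.le) (hΦle t ht.le)
    have hP : 0 < f (Φ t) := hfpos _ (hΦnonneg t ht.le)
    have hF : 0 < f t := hfpos t ht.le
    apply div_nonpos_of_nonpos_of_nonneg _ (by positivity)
    have key : (1 - ε) * (derivWithin f (Ici 0) (Φ t) * ((1 - ε) * f (Φ t) / f t)) * f t -
        (1 - ε) * f (Φ t) * derivWithin f (Ici 0) t =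
        (1 - ε) * f (Φ t) * ((1 - ε) * derivWithin f (Ici 0) (Φ t) - derivWithin f (Ici 0) t) := by
      field_simp
    rw [key]
    apply mul_nonpos_of_nonneg_of_nonpos (by positivity)
    nlinarith
  -- antitone derivative, concavity
  have hGanti : AntitoneOn (fun t => (1 - ε) * f (Φ t) / f t) (Ici 0) := by
    apply antitoneOn_of_deriv_nonpos (convex_Ici 0) hGcont
    · intro x hx
      rw [interior_Ici] at hx
      exact ((hG2 x (mem_Ioi.1 hx).le).differentiableWithinAt.differentiableAt
        (Ici_mem_nhds hx)).differentiableWithinAt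
    · intro x hx
      rw [interior_Ici] at hx
      rw [((hG2 x (mem_Ioi.1 hx).le).hasDerivAt (Ici_mem_nhds hx)).deriv]
      exact hG2le x hx
  have hderiv' : ∀ x : ℝ, 0 < x → deriv Φ x = (1 - ε) * f (Φ x) / f x :=
    fun x hx => ((hG x hx.le).hasDerivAt (Ici_mem_nhds hx)).deriv
  have hconc : ConcaveOn ℝ (Ici 0) Φ := by
    apply AntitoneOn.concaveOn_of_deriv (convex_Ici 0) hΦcont
    · intro x hx
      rw [interior_Ici] at hx
      exact ((hG x (mem_Ioi.1 hx).le).differentiableWithinAt.differentiableAt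
        (Ici_mem_nhds hx)).differentiableWithinAt
    · intro a ha b hb hab
      rw [interior_Ici] at ha hb
      rw [hderiv' a ha, hderiv' b hb]
      exact hGanti (mem_Ioi.1 ha).le (mem_Ioi.1 hb).le hab
  -- derivative bounds
  have hd01 : ∀ t : ℝ, 0 < t → 0 < derivWithin Φ (Ici 0) t ∧ derivWithin Φ (Ici 0) t < 1 := by
    intro t ht
    rw [hderiv t ht.le]
    have hP : 0 < f (Φ t) := hfpos _ (hΦnonneg t ht.le)
    have hF : 0 < f t := hfpos t ht.le
    constructor
    · positivity
    · rw [div_lt_one hF]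
      have hPF : f (Φ t) ≤ f t := hfmono (hΦnonneg t ht.le) (mem_Ici.2 ht.le) (hΦle t ht.le)
      nlinarith
  -- value of the derivative at 0
  have hd0 : derivWithin Φ (Ici 0) 0 = 1 - ε := by
    rw [hderiv 0 self_mem_Ici, hΦ0]
    field_simp [hfne 0 self_mem_Ici]
  -- second derivative at 0
  have hdd0 : derivWithin (derivWithin Φ (Ici 0)) (Ici 0) 0 =
      -ε * (1 - ε) * derivWithin f (Ici 0) 0 / f 0 := by
    have e1 : derivWithin (derivWithin Φ (Ici 0)) (Ici 0) 0 =
        derivWithin (fun t => (1 - ε) * f (Φ t) / f t) (Ici 0) 0 :=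
      derivWithin_congr (fun t ht => hderiv t ht) (hderiv 0 self_mem_Ici)
    have e2 := (hG2 0 self_mem_Ici).derivWithin (uniqueDiffOn_Ici 0 0 self_mem_Ici)
    rw [e1, e2, hΦ0]
    have hF : f 0 ≠ 0 := hfne 0 self_mem_Ici
    field_simp
    ring
  -- the growth bound
  have hbound : ∃ C : ℝ, 0 < C ∧ ∀ t ∈ Ici (0:ℝ), 0 ≤ f (Φ t) ∧ f (Φ t) ≤ C / ε * (1 + t) := by
    have hh1 : 0 < h 1 := by
      have := hmonoh self_mem_Ici (mem_Ici.2 zero_le_one) zero_lt_one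
      linarith [h0]
    refine ⟨max (f 1) (1 / h 1), lt_max_of_lt_left (hfpos 1 (mem_Ici.2 zero_le_one)), ?_⟩
    intro t ht
    have hΦt : Φ t ∈ Ici (0:ℝ) := hΦnonneg t ht
    have hP : 0 < f (Φ t) := hfpos _ hΦt
    have hCpos : 0 < max (f 1) (1 / h 1) := lt_max_of_lt_left (hfpos 1 (mem_Ici.2 zero_le_one))
    refine ⟨hP.le, ?_⟩
    rcases le_or_gt t 1 with htl | htl
    · have h1 : f (Φ t) ≤ f 1 :=
        hfmono hΦt (mem_Ici.2 zero_le_one) (le_trans (hΦle t ht) htl)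
      have h2 : f 1 ≤ max (f 1) (1 / h 1) := le_max_left _ _
      have h3 : max (f 1) (1 / h 1) ≤ max (f 1) (1 / h 1) / ε * 1 := by
        rw [mul_one, le_div_iff₀ hε0]
        nlinarith
      have h4 : max (f 1) (1 / h 1) / ε * 1 ≤ max (f 1) (1 / h 1) / ε * (1 + t) := by
        apply mul_le_mul_of_nonneg_left (by linarith [ht.out]) (by positivity)
      linarith
    · -- t > 1 : use the integral estimate
      have ht0 : (0:ℝ) ≤ t := le_trans zero_le_one htl.le
      have hht : h 1 ≤ h t := hmonoh.monotoneOn (mem_Ici.2 zero_le_one) (mem_Ici.2 ht0) htl.le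
      have hkey : ε * h t * f (Φ t) ≤ t := by
        have hsplit := hadd (Φ t) t hΦt ht0
        have hbd : (∫ s in (Φ t)..t, 1 / f s) ≤ (t - Φ t) * (1 / f (Φ t)) := by
          have := intervalIntegral.integral_mono_on (hΦle t ht)
            (hint (Φ t) t hΦt ht0)
            intervalIntegrable_const
            (fun x hx => one_div_le_one_div_of_le hP (hfmono hΦt (mem_Ici.2 (le_trans hΦt hx.1)) hx.1))
          simpa [smul_eq_mul, mul_comm] using this
        have hεh : h t - h (Φ t) = ε * h t := by
          rw [hΦh t ht]; ring
        have hle2 : ε * h t ≤ (t - Φ t) * (1 / f (Φ t)) := by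
          rw [← hεh]; linarith
        have h2 : ε * h t * f (Φ t) ≤ t - Φ t := by
          calc ε * h t * f (Φ t) ≤ (t - Φ t) * (1 / f (Φ t)) * f (Φ t) :=
                mul_le_mul_of_nonneg_right hle2 hP.le
            _ = t - Φ t := by field_simp
        linarith [hΦnonneg t ht]
      have hC : 1 / h 1 ≤ max (f 1) (1 / h 1) := le_max_right _ _
      rw [div_mul_eq_mul_div, le_div_iff₀ hε0]
      have h5 : f (Φ t) * ε * h 1 ≤ t := by
        calc f (Φ t) * ε * h 1 ≤ f (Φ t) * ε * h t := by
                have := mul_le_mul_of_nonneg_left hht (by positivity : (0:ℝ) ≤ f (Φ t) * ε)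
                calc f (Φ t) * ε * h 1 = f (Φ t) * ε * h 1 := rfl
                  _ ≤ f (Φ t) * ε * h t := this
          _ = ε * h t * f (Φ t) := by ring
          _ ≤ t := hkey
      have h6 : f (Φ t) * ε ≤ t / h 1 := by
        rw [le_div_iff₀ hh1]; linarith
      calc f (Φ t) * ε ≤ t / h 1 := h6
        _ = (1 / h 1) * t := by ring
        _ ≤ max (f 1) (1 / h 1) * (1 + t) := by nlinarith
  exact ⟨hc2, hΦ0, fun t ht => by rw [hderiv t ht]; field_simp [hfne t ht],
    hΦmono, hconc, hd01, fun t ht => ⟨hΦnonneg t ht, hΦle t ht⟩, hd0, hdd0, hbound⟩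


end
end
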